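/- arXiv:1212.4816 — 2 statements merged into one kernel-verified Lean document; each statement's English description precedes it below -/
import Mathlib

section
/- Let m > 1 and n ≥ 3 be integers. Then the determinant of the adjacency matrix of the Cartesian product P_{m-1} □ C_n of the path graph on m-1 vertices and the cycle graph on n vertices equals m if n is odd and gcd(m,n) = 1; equals (-1)^(m-1) · m^2 if n is even and gcd(m, n/2) = 1; and equals 0 otherwise. -/
/-!
Over `ℂ` the adjacency matrix of `P_s □ C_n` is `T ⊗ 1 + 1 ⊗ C`, where `T` and `C` are those of
the factors. The Vandermonde matrix of a primitive `n`-th root of unity `ω` diagonalises `C` with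
eigenvalues `ωᵏ + ω⁻ᵏ`, so the determinant is `∏ₖ det (T + (ωᵏ + ω⁻ᵏ))`. The tridiagonal
determinant `det (T + μ)` is the Chebyshev polynomial `S_s(μ)`, and
`zˢ S_s(z + z⁻¹) = 1 + z² + ⋯ + z²ˢ`; since `∏ₖ ωᵏ = ±1`, the determinant is, up to sign,
`∏ₖ (1 + ω²ᵏ + ⋯ + ω²ᵏˢ)`. For odd `n`, `ω²` is again a primitive `n`-th root; for even `n` it is a
primitive `n/2`-th root, run through twice. Finally, for a primitive `N`-th root `η` and
`m = s + 1`, the product `∏_{k<N} (1 + ηᵏ + ⋯ + ηᵏ⁽ᵐ⁻¹⁾)` is `m` if `gcd(m, N) = 1`: for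
`0 < k < N` the factors are `(ηᵏᵐ - 1)/(ηᵏ - 1)`, and `∏ₖ (ηᵏᵐ - 1) = ∏ₖ (ηᵏ - 1)` because `ηᵐ` is
primitive too. Otherwise the factor with `k = N / gcd(m, N)` vanishes.
-/

open SimpleGraph

open Finset Matrix Polynomial Kronecker

theorem prod_range_mul_eq_pow_of_pow_eq_one {M R : Type*} [CommMonoid M] [Monoid R] {η : R}
    {N : ℕ} (hη : η ^ N = 1) (f : R → M) (d : ℕ) :
    ∏ k ∈ range (d * N), f (η ^ k) = (∏ k ∈ range N, f (η ^ k)) ^ d := by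
  induction d with
  | zero => simp
  | succ d ih =>
    rw [add_mul, one_mul, prod_range_add, ih, pow_succ]
    congr 1
    refine prod_congr rfl fun k _ => ?_
    rw [pow_add, pow_mul', hη, one_pow, one_mul]

namespace SimpleGraph

theorem map_adjMatrix {V R S : Type*} [NonAssocSemiring R] [NonAssocSemiring S] (f : R →+* S)
    (G : SimpleGraph V) [DecidableRel G.Adj] : (G.adjMatrix R).map f = G.adjMatrix S := by
  ext i j
  simp [adjMatrix_apply, apply_ite f]

theorem adjMatrix_boxProd {V W : Type*} [DecidableEq V] [DecidableEq W] (R : Type*)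
    [NonAssocSemiring R] (G : SimpleGraph V) (H : SimpleGraph W) [DecidableRel G.Adj]
    [DecidableRel H.Adj] [DecidableRel (G □ H).Adj] :
    (G □ H).adjMatrix R = G.adjMatrix R ⊗ₖ 1 + 1 ⊗ₖ H.adjMatrix R := by
  ext ⟨a, b⟩ ⟨c, d⟩
  by_cases hac : a = c <;> by_cases hbd : b = d <;>
    simp [adjMatrix_apply, one_apply, boxProd_adj, hac, hbd]

open scoped Classical in
theorem submatrix_succ_adjMatrix_pathGraph_add_smul_one {R : Type*} [Semiring R] (μ : R)
    (s : ℕ) :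
    ((pathGraph (s + 1)).adjMatrix R + μ • 1).submatrix Fin.succ Fin.succ =
      (pathGraph s).adjMatrix R + μ • 1 := by
  ext i j
  simp [pathGraph_adj, one_apply]

open scoped Classical in
theorem det_adjMatrix_pathGraph_add_smul_one {R : Type*} [CommRing R] (μ : R) (s : ℕ) :
    ((pathGraph s).adjMatrix R + μ • 1).det = (Chebyshev.S R s).eval μ := by
  induction s using Nat.twoStepInduction with
  | zero => simp
  | one => simp [det_unique]
  | more s ih₁ ih₂ =>
    set M : Matrix (Fin (s + 2)) (Fin (s + 2)) R := (pathGraph (s + 2)).adjMatrix R + μ • 1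
    have hcol :
        (Fin.succ 0).succAbove ∘ Fin.succ = Fin.succ ∘ (Fin.succ : Fin s → Fin (s + 1)) := by
      ext j
      simp [Fin.succAbove_of_le_castSucc, Fin.le_def]
    have hminor₀ : (M.submatrix Fin.succ Fin.succ).det = (Chebyshev.S R (s + 1 : ℕ)).eval μ := by
      rw [submatrix_succ_adjMatrix_pathGraph_add_smul_one, ih₂]
    have hminor₁ : (M.submatrix Fin.succ (Fin.succ 0).succAbove).det =
        (Chebyshev.S R s).eval μ := by
      rw [det_succ_column_zero, Fin.sum_univ_succ, sum_eq_zero, Fin.succAbove_zero,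
        submatrix_submatrix, hcol, ← submatrix_submatrix,
        submatrix_succ_adjMatrix_pathGraph_add_smul_one,
        submatrix_succ_adjMatrix_pathGraph_add_smul_one, ih₁]
      · simp [M, pathGraph_adj]
      · intro i _
        simp [M, pathGraph_adj, one_apply]
    rw [det_succ_row_zero, Fin.sum_univ_succ, Fin.sum_univ_succ, sum_eq_zero, Fin.succAbove_zero,
      hminor₀, hminor₁, show ((s + 2 : ℕ) : ℤ) = s + 2 by push_cast; ring, Chebyshev.S_add_two]
    · simp [M, pathGraph_adj, sub_eq_add_neg]
    · intro j _
      simp [M, pathGraph_adj, (Fin.succ_ne_zero _).symm]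

end SimpleGraph

namespace Polynomial.Chebyshev

theorem pow_mul_eval_S_add_of_mul_eq_one {R : Type*} [CommRing R] {z w : R} (h : z * w = 1)
    (s : ℕ) : z ^ s * (S R s).eval (z + w) = ∑ j ∈ range (s + 1), (z ^ 2) ^ j := by
  induction s using Nat.twoStepInduction with
  | zero => simp
  | one => simp [sum_range_succ, mul_add, h, sq, add_comm]
  | more s ih₁ ih₂ =>
    rw [sum_range_succ] at ih₂
    rw [show ((s + 2 : ℕ) : ℤ) = s + 2 by push_cast; ring, S_add_two, sum_range_succ,
      sum_range_succ, eval_sub, eval_mul, eval_X]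
    push_cast at ih₂
    linear_combination (z ^ 2 + z * w) * ih₂ - z ^ 2 * ih₁ +
      (∑ j ∈ range (s + 1), (z ^ 2) ^ j + (z ^ 2) ^ (s + 1)) * h

end Polynomial.Chebyshev

namespace Matrix

theorem kronecker_one_add_one_kronecker_diagonal {R m n : Type*} [DecidableEq m] [DecidableEq n]
    [CommSemiring R] (A : Matrix m m R) (d : n → R) :
    A ⊗ₖ 1 + 1 ⊗ₖ diagonal d = blockDiagonal fun k => A + d k • 1 := by
  ext ⟨i, k⟩ ⟨j, l⟩
  by_cases hkl : k = l <;> simp [blockDiagonal_apply, hkl, mul_comm]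

theorem det_kronecker_one_add_one_kronecker_of_mul_eq_mul_diagonal {R m n : Type*} [Fintype m]
    [DecidableEq m] [Fintype n] [DecidableEq n] [CommRing R] [IsDomain R] (A : Matrix m m R)
    {B P : Matrix n n R} {d : n → R} (hP : P.det ≠ 0) (hBP : B * P = P * diagonal d) :
    (A ⊗ₖ 1 + 1 ⊗ₖ B).det = ∏ k, (A + d k • 1).det := by
  have hconj : (A ⊗ₖ 1 + 1 ⊗ₖ B) * (1 ⊗ₖ P) = (1 ⊗ₖ P) * (A ⊗ₖ 1 + 1 ⊗ₖ diagonal d) := by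
    simp only [add_mul, mul_add, ← mul_kronecker_mul, Matrix.one_mul, Matrix.mul_one, hBP]
  have hdet : (1 ⊗ₖ P : Matrix (m × n) (m × n) R).det ≠ 0 := by
    rw [det_kronecker, det_one, one_pow, one_mul]
    exact pow_ne_zero _ hP
  apply mul_right_cancel₀ hdet
  rw [← det_mul, hconj, det_mul, mul_comm, kronecker_one_add_one_kronecker_diagonal,
    det_blockDiagonal]

end Matrix

namespace IsPrimitiveRoot

theorem pow_val_add {M : Type*} [CommMonoid M] {n : ℕ} {ω : M} (hω : IsPrimitiveRoot ω n)
    (a b : Fin n) : ω ^ ((a + b : Fin n) : ℕ) = ω ^ (a : ℕ) * ω ^ (b : ℕ) := by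
  have hmod := pow_mod_orderOf ω (a + b : ℕ)
  rwa [← hω.eq_orderOf, pow_add] at hmod

theorem adjMatrix_cycleGraph_mul_vandermonde {K : Type*} [Field K] {n : ℕ} (hn : 3 ≤ n) {ω : K}
    (hω : IsPrimitiveRoot ω n) :
    (cycleGraph n).adjMatrix K * vandermonde (fun i : Fin n => ω ^ (i : ℕ)) =
      vandermonde (fun i : Fin n => ω ^ (i : ℕ)) *
        diagonal fun k : Fin n => ω ^ (k : ℕ) + ω⁻¹ ^ (k : ℕ) := by
  obtain ⟨n, rfl⟩ : ∃ k, n = k + 3 := ⟨n - 3, by omega⟩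
  have hsucc (i : Fin (n + 3)) : ω ^ ((i + 1 : Fin (n + 3)) : ℕ) = ω ^ (i : ℕ) * ω := by
    rw [hω.pow_val_add, Fin.val_one, pow_one]
  have hpred (i : Fin (n + 3)) : ω ^ ((i - 1 : Fin (n + 3)) : ℕ) = ω ^ (i : ℕ) * ω⁻¹ := by
    rw [eq_mul_inv_iff_mul_eq₀ (hω.ne_zero (by omega)), ← hsucc, sub_add_cancel]
  have hne (i : Fin (n + 3)) : i - 1 ≠ i + 1 := by
    simp only [ne_eq, sub_eq_iff_eq_add, add_assoc, left_eq_add]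
    exact ne_of_beq_false rfl
  ext i l
  rw [adjMatrix_mul_apply, cycleGraph_neighborFinset, sum_pair (hne i), mul_diagonal]
  simp only [vandermonde_apply, hsucc, hpred]
  ring

theorem prod_range_pow {R : Type*} [CommRing R] [IsDomain R] {n : ℕ} {ω : R}
    (hω : IsPrimitiveRoot ω n) (hn : 0 < n) : ∏ k ∈ range n, ω ^ k = -(-1) ^ n := by
  have h : (-1 : R) = (-1) ^ n * ∏ k ∈ range n, ω ^ k := by
    simpa [eval_prod, prod_neg, zero_pow hn.ne'] using
      congrArg (eval 0) (X_pow_sub_C_eq_prod hω hn (one_pow n))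
  have hsq : ((-1 : R) ^ n) ^ 2 = 1 := by rw [← pow_mul, mul_comm, pow_mul, neg_one_sq, one_pow]
  linear_combination (-(-1 : R) ^ n) * h - (∏ k ∈ range n, ω ^ k) * hsq

theorem prod_geom_sum_pow {R : Type*} [CommRing R] [IsDomain R] {N : ℕ} {η : R}
    (hη : IsPrimitiveRoot η N) (hN : 0 < N) (m : ℕ) :
    ∏ k ∈ range N, ∑ j ∈ range m, (η ^ k) ^ j = if m.Coprime N then (m : R) else 0 := by
  split_ifs with hmN
  · obtain ⟨N, rfl⟩ := Nat.exists_eq_succ_of_ne_zero hN.ne'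
    have hsub : ∏ k ∈ range N, (η ^ (k + 1) - 1) ≠ 0 :=
      prod_ne_zero_iff.2 fun k hk =>
        sub_ne_zero.2 (hη.pow_ne_one_of_pos_of_lt k.succ_ne_zero (by simpa using hk))
    have hperm : ∏ k ∈ range N, ((η ^ m) ^ (k + 1) - 1) = ∏ k ∈ range N, (η ^ (k + 1) - 1) :=
      mul_left_cancel₀ (pow_ne_zero N (neg_ne_zero.2 one_ne_zero))
        ((hη.pow_of_coprime m hmN).prod_pow_sub_one_eq_order.trans
          hη.prod_pow_sub_one_eq_order.symm)
    have htail : ∏ k ∈ range N, ∑ j ∈ range m, (η ^ (k + 1)) ^ j = 1 := by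
      apply mul_right_cancel₀ hsub
      rw [one_mul, ← prod_mul_distrib, ← hperm]
      refine prod_congr rfl fun k _ => ?_
      rw [geom_sum_mul, ← pow_mul, ← pow_mul, mul_comm]
    rw [prod_range_succ', htail]
    simp
  · set d := m.gcd N
    have hd : 1 < d := lt_of_le_of_ne (Nat.gcd_pos_of_pos_right m hN) (Ne.symm hmN)
    have hk : N / d < N := Nat.div_lt_self hN hd
    have hk0 : N / d ≠ 0 := (Nat.div_pos (Nat.gcd_le_right _ hN) (by omega)).ne'
    apply prod_eq_zero (mem_range.2 hk)
    have hpow : (η ^ (N / d)) ^ m = 1 := by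
      rw [← pow_mul, hη.pow_eq_one_iff_dvd]
      have := Nat.mul_dvd_mul_left (N / d) (Nat.gcd_dvd_left m N)
      rwa [Nat.div_mul_cancel (Nat.gcd_dvd_right m N)] at this
    have hne : η ^ (N / d) - 1 ≠ 0 := sub_ne_zero.2 (hη.pow_ne_one_of_pos_of_lt hk0 hk)
    have hgeom := geom_sum_mul (η ^ (N / d)) m
    rw [hpow, sub_self] at hgeom
    exact (mul_eq_zero.1 hgeom).resolve_right hne

open scoped Classical in
theorem det_adjMatrix_pathGraph_boxProd_cycleGraph {K : Type*} [Field K] {n : ℕ} (hn : 3 ≤ n)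
    {ω : K} (hω : IsPrimitiveRoot ω n) (s : ℕ) :
    (((pathGraph s).boxProd (cycleGraph n)).adjMatrix K).det =
      (-1) ^ ((n + 1) * s) * ∏ k ∈ range n, ∑ j ∈ range (s + 1), ((ω ^ 2) ^ k) ^ j := by
  have hV : (vandermonde fun i : Fin n => ω ^ (i : ℕ)).det ≠ 0 :=
    det_vandermonde_ne_zero_iff.2 fun i j hij => Fin.ext (hω.pow_inj i.isLt j.isLt hij)
  have hdiag : (((pathGraph s).boxProd (cycleGraph n)).adjMatrix K).det =
      ∏ k ∈ range n, (Chebyshev.S K s).eval (ω ^ k + ω⁻¹ ^ k) := by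
    rw [adjMatrix_boxProd, det_kronecker_one_add_one_kronecker_of_mul_eq_mul_diagonal _ hV
      (hω.adjMatrix_cycleGraph_mul_vandermonde hn)]
    simp only [det_adjMatrix_pathGraph_add_smul_one]
    exact Fin.prod_univ_eq_prod_range (fun k => (Chebyshev.S K s).eval (ω ^ k + ω⁻¹ ^ k)) n
  have hsign : ∏ k ∈ range n, (ω ^ k) ^ s = (-1) ^ ((n + 1) * s) := by
    rw [prod_pow, hω.prod_range_pow (by omega), pow_mul, pow_succ, mul_neg_one]
  have hinv (k : ℕ) : ω ^ k * ω⁻¹ ^ k = 1 := by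
    rw [← mul_pow, mul_inv_cancel₀ (hω.ne_zero (by omega)), one_pow]
  have key : (-1) ^ ((n + 1) * s) * (((pathGraph s).boxProd (cycleGraph n)).adjMatrix K).det =
      ∏ k ∈ range n, ∑ j ∈ range (s + 1), ((ω ^ 2) ^ k) ^ j := by
    rw [← hsign, hdiag, ← prod_mul_distrib]
    refine prod_congr rfl fun k _ => ?_
    rw [Chebyshev.pow_mul_eval_S_add_of_mul_eq_one (hinv k), pow_right_comm]
  rw [← key, ← mul_assoc, ← pow_add, Even.neg_one_pow ⟨_, rfl⟩, one_mul]

end IsPrimitiveRoot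

open scoped Classical in
theorem det_adjMatrix_cylinder (m n : ℕ) (hm : 1 < m) (hn : 3 ≤ n) :
    (((pathGraph (m - 1)).boxProd (cycleGraph n)).adjMatrix ℤ).det =
      if Odd n ∧ Nat.gcd m n = 1 then (m : ℤ)
      else if Even n ∧ Nat.gcd m (n / 2) = 1 then (-1 : ℤ) ^ (m - 1) * (m : ℤ) ^ 2
      else 0 := by
  obtain ⟨s, rfl⟩ : ∃ s, m = s + 1 := ⟨m - 1, by omega⟩
  obtain ⟨ω, hω⟩ : ∃ ω : ℂ, IsPrimitiveRoot ω n := ⟨_, Complex.isPrimitiveRoot_exp n (by omega)⟩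
  apply Int.cast_injective (α := ℂ)
  rw [Int.cast_det, ← Int.coe_castRingHom, map_adjMatrix, Nat.add_sub_cancel,
    hω.det_adjMatrix_pathGraph_boxProd_cycleGraph hn]
  rcases Nat.even_or_odd' n with ⟨N, rfl | rfl⟩
  · have hη : IsPrimitiveRoot (ω ^ 2) N := hω.pow (by omega) rfl
    have hsign : (-1 : ℂ) ^ ((2 * N + 1) * s) = (-1) ^ s := by
      rw [pow_mul, (odd_two_mul_add_one N).neg_one_pow]
    rw [prod_range_mul_eq_pow_of_pow_eq_one hη.pow_eq_one (fun x => ∑ j ∈ range (s + 1), x ^ j),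
      hη.prod_geom_sum_pow (by omega), hsign]
    simp [Nat.coprime_iff_gcd_eq_one]
  · have hη := hω.pow_of_coprime 2 (Nat.coprime_two_left.2 (odd_two_mul_add_one N))
    have hsign : (-1 : ℂ) ^ ((2 * N + 1 + 1) * s) = 1 := by
      rw [pow_mul, Even.neg_one_pow ⟨N + 1, by ring⟩, one_pow]
    rw [hη.prod_geom_sum_pow (by omega), hsign, one_mul]
    simp [Nat.coprime_iff_gcd_eq_one]
end

section
/- Let n be a positive integer and let a be an integer with gcd(a,n) = 1. Then ∏_{j=1}^{n-1} cos(a j π / n) equals (-1)^(a(n-1)/2) / 2^(n-1) if n is odd, and equals 0 if n is even. (If n is odd then n-1 is even, so the exponent is an integer.) -/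
/-!
With `ζ = exp (a π i / n)` we have `2 cos (a j π / n) ζ ^ j = 1 + μ ^ j`, where `μ = ζ ^ 2` is a
primitive `n`-th root of unity because `gcd (a, n) = 1`. Evaluating
`∏_{j=1}^{n-1} (x - μ ^ j) = 1 + x + ⋯ + x ^ (n - 1)` at `x = -1` shows that `∏ (1 + μ ^ j)` is `1`
for odd `n` and `0` for even `n`. For `n = 2m + 1` the remaining factor is
`∏ ζ ^ j = (ζ ^ n) ^ m = (-1) ^ (a m)`.
-/

open Real Finset

theorem Finset.prod_Icc_one_eq_prod_range {M : Type*} [CommMonoid M] (f : ℕ → M) (N : ℕ) :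
    ∏ j ∈ Icc 1 N, f j = ∏ k ∈ range N, f (k + 1) := by
  rw [← Ico_add_one_right_eq_Icc, prod_Ico_eq_prod_range, Nat.add_sub_cancel]
  simp only [add_comm 1]

theorem Finset.prod_range_two_mul_pow_add_one {M : Type*} [CommMonoid M] (x : M) (m : ℕ) :
    ∏ k ∈ range (2 * m), x ^ (k + 1) = (x ^ (2 * m + 1)) ^ m := by
  have hgauss := sum_range_id_mul_two (2 * m + 1)
  rw [sum_range_succ', Nat.add_sub_cancel, add_zero] at hgauss
  rw [prod_pow_eq_pow_sum, ← pow_mul]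
  congr 1
  nlinarith

namespace IsPrimitiveRoot

open Polynomial

variable {R : Type*} [CommRing R] [IsDomain R] {n : ℕ} {μ : R}

theorem prod_sub_pow_eq_geom_sum (hμ : IsPrimitiveRoot μ (n + 1)) (x : R) :
    ∏ k ∈ range n, (x - μ ^ (k + 1)) = ∑ i ∈ range (n + 1), x ^ i := by
  have h := X_pow_sub_C_eq_prod hμ n.zero_lt_succ (one_pow (n + 1))
  rw [C_1, ← mul_geom_sum, prod_range_succ', pow_zero, mul_one, mul_comm, eq_comm] at h
  simpa only [map_pow, eval_prod, eval_sub, eval_X, eval_pow, eval_C, eval_geom_sum, mul_one] using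
    congrArg (eval x) (mul_right_cancel₀ (X_sub_C_ne_zero 1) h)

theorem prod_one_add_pow (hμ : IsPrimitiveRoot μ (n + 1)) :
    ∏ k ∈ range n, (1 + μ ^ (k + 1)) = if Even n then 1 else 0 := by
  have h := hμ.prod_sub_pow_eq_geom_sum (-1)
  simp only [← neg_add', prod_neg, card_range, neg_one_geom_sum, Nat.even_add_one] at h
  rcases n.even_or_odd with hn | hn
  · simpa [hn, hn.neg_one_pow] using h
  · simpa [hn, Nat.not_even_iff_odd.mpr hn] using h

end IsPrimitiveRoot

namespace Complex

theorem two_cos_nat_mul_mul_exp_pow (k : ℕ) (z : ℂ) :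
    2 * cos (k * z) * exp (z * I) ^ k = 1 + exp (2 * z * I) ^ k := by
  rw [two_cos, ← exp_nat_mul, ← exp_nat_mul, add_mul, ← exp_add, ← exp_add]
  ring_nf
  simp [add_comm]

theorem exp_int_mul_pi_div_mul_I_pow (a : ℤ) {n : ℕ} (hn : n ≠ 0) :
    exp (a * π / n * I) ^ n = (-1) ^ a := by
  rw [← exp_nat_mul, ← exp_pi_mul_I, ← exp_int_mul]
  congr 1
  field_simp

theorem prod_two_cos_mul_exp_pow (N : ℕ) (a : ℤ) (ha : IsCoprime a (N + 1)) :
    ∏ k ∈ range N, (2 * cos (a * (k + 1) * π / (N + 1)) * exp (a * π / (N + 1) * I) ^ (k + 1))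
      = if Even N then 1 else 0 := by
  have hμ := isPrimitiveRoot_exp_of_isCoprime a (N + 1) N.succ_ne_zero (by exact_mod_cast ha)
  rw [← hμ.prod_one_add_pow]
  refine prod_congr rfl fun k _ => ?_
  calc _ = 2 * cos ((k + 1 : ℕ) * (a * π / (N + 1))) * exp (a * π / (N + 1) * I) ^ (k + 1) := by
        push_cast; ring_nf
    _ = _ := by rw [two_cos_nat_mul_mul_exp_pow]; push_cast; ring_nf

theorem prod_range_cos_eq_zero {N : ℕ} (hN : Odd N) (a : ℤ) (ha : IsCoprime a (N + 1)) :
    ∏ k ∈ range N, cos (a * (k + 1) * π / (N + 1)) = 0 := by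
  have key := prod_two_cos_mul_exp_pow N a ha
  rw [if_neg (Nat.not_even_iff_odd.mpr hN), prod_mul_distrib, prod_mul_distrib] at key
  have hexp : ∏ k ∈ range N, exp (a * π / (N + 1) * I) ^ (k + 1) ≠ 0 :=
    prod_ne_zero_iff.mpr fun _ _ => pow_ne_zero _ (exp_ne_zero _)
  simpa [hexp] using key

theorem prod_range_cos_eq_neg_one_zpow_div (m : ℕ) (a : ℤ) (ha : IsCoprime a (2 * m + 1)) :
    ∏ k ∈ range (2 * m), cos (a * (k + 1) * π / (2 * m + 1)) = (-1) ^ (a * m) / 2 ^ (2 * m) := by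
  have key := prod_two_cos_mul_exp_pow (2 * m) a (by exact_mod_cast ha)
  have hζ := exp_int_mul_pi_div_mul_I_pow a (2 * m).succ_ne_zero
  rw [if_pos (even_two_mul m), prod_mul_distrib, prod_mul_distrib, prod_const, card_range,
    prod_range_two_mul_pow_add_one] at key
  push_cast at key hζ
  rw [hζ, ← zpow_natCast ((-1 : ℂ) ^ a) m, ← zpow_mul] at key
  have hsq : ((-1 : ℂ) ^ (a * m)) * (-1) ^ (a * m) = 1 := by
    rw [← zpow_add₀ (by norm_num)]
    exact Even.neg_one_zpow ⟨_, rfl⟩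
  set P := ∏ k ∈ range (2 * m), cos (a * (k + 1) * π / (2 * m + 1))
  rw [eq_div_iff (pow_ne_zero _ two_ne_zero)]
  linear_combination (-1 : ℂ) ^ (a * m) * key - 2 ^ (2 * m) * P * hsq

end Complex

theorem prod_cos_eq (n : ℕ) (hn : 0 < n) (a : ℤ) (ha : Int.gcd a n = 1) :
    ∏ j ∈ Finset.Icc 1 (n - 1), Real.cos (a * j * π / n) =
      if Odd n then (-1 : ℝ) ^ (a * ((n : ℤ) - 1) / 2) / 2 ^ (n - 1) else 0 := by
  obtain ⟨N, rfl⟩ : ∃ N, n = N + 1 := ⟨n - 1, by omega⟩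
  have ha' : IsCoprime a (N + 1 : ℕ) := Int.isCoprime_iff_gcd_eq_one.mpr ha
  rw [Nat.add_sub_cancel, prod_Icc_one_eq_prod_range]
  apply Complex.ofReal_injective
  rcases N.even_or_odd' with ⟨m, rfl | rfl⟩
  · have hexp : a * (((2 * m + 1 : ℕ) : ℤ) - 1) / 2 = a * m := by
      push_cast
      rw [show a * (2 * m + 1 - 1) = a * m * 2 by ring]
      exact Int.mul_ediv_cancel _ two_ne_zero
    rw [if_pos (odd_two_mul_add_one m), hexp]
    push_cast at ha' ⊢
    exact Complex.prod_range_cos_eq_neg_one_zpow_div m a ha'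
  · rw [if_neg (Nat.not_odd_iff_even.mpr (odd_two_mul_add_one m).add_one)]
    push_cast at ha' ⊢
    exact_mod_cast Complex.prod_range_cos_eq_zero (odd_two_mul_add_one m) a ha'
end
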